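/- Let σ : ℝ≥0 → ℝ be absolutely continuous and suppose that for almost every t ≥ 0 its derivative satisfies σ'(t) ∈ b·(d(t) − (K/b)·sign(σ(t))) for some constant b ≠ 0, a measurable disturbance d with |d(t)| ≤ K_d, and K > |b|·K_d. Then for almost every t, (1/2)·d/dt |σ(t)|² ≤ −(K − |b|·K_d)·|σ(t)|. -/

import Mathlib

/-! Pointwise Lyapunov estimate: `(1/2)(σ²)' = σ σ' = b σ d - K σ w`, and `σ w = |σ|` for every
selection `w ∈ sign σ` (at `σ = 0` both sides vanish whatever `w ∈ [-1,1]` is), so the switching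
term dissipates `K |σ|` while the disturbance contributes at most `|b| K_d |σ|`. -/

open MeasureTheory

def signSet (s : ℝ) : Set ℝ := if s = 0 then Set.Icc (-1 : ℝ) 1 else {s / |s|}

theorem mul_eq_abs_of_mem_signSet {s w : ℝ} (hw : w ∈ signSet s) : s * w = |s| := by
  by_cases hs : s = 0
  · simp [hs]
  · rw [signSet, if_neg hs, Set.mem_singleton_iff] at hw
    rw [hw, mul_div_assoc', div_eq_iff (abs_ne_zero.mpr hs), ← sq, ← sq, sq_abs]

theorem HasDerivAt.abs_sq {f : ℝ → ℝ} {f' x : ℝ} (hf : HasDerivAt f f' x) :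
    HasDerivAt (fun y => |f y| ^ 2) (2 * f x * f') x := by
  simp_rw [sq_abs]
  simpa [mul_assoc] using hf.fun_pow 2

theorem mul_sub_le_of_mem_signSet {s d w b K K_d : ℝ} (hw : w ∈ signSet s) (hd : |d| ≤ K_d) :
    s * (b * d - K * w) ≤ -(K - |b| * K_d) * |s| := by
  have hdist : b * (s * d) ≤ |b| * K_d * |s| :=
    calc b * (s * d) ≤ |b * (s * d)| := le_abs_self _
      _ = |b| * |d| * |s| := by rw [abs_mul, abs_mul]; ring
      _ ≤ |b| * K_d * |s| := by gcongr
  calc s * (b * d - K * w) = b * (s * d) - K * (s * w) := by ring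
    _ = b * (s * d) - K * |s| := by rw [mul_eq_abs_of_mem_signSet hw]
    _ ≤ -(K - |b| * K_d) * |s| := by linarith

theorem stmt0_general (σ σ' d w : ℝ → ℝ) (b K K_d : ℝ)
    (hd : ∀ t, 0 ≤ t → |d t| ≤ K_d)
    (hderiv : ∀ᵐ t : ℝ, 0 ≤ t → HasDerivAt σ (σ' t) t)
    (hsel : ∀ᵐ t : ℝ, 0 ≤ t → w t ∈ signSet (σ t) ∧ σ' t = b * d t - K * w t) :
    ∀ᵐ t : ℝ, 0 ≤ t → (1 / 2) * deriv (fun s => |σ s| ^ 2) t ≤ -(K - |b| * K_d) * |σ t| := by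
  filter_upwards [hderiv, hsel] with t hσ hwσ ht
  obtain ⟨hw, hσ'⟩ := hwσ ht
  rw [(hσ ht).abs_sq.deriv, mul_assoc, hσ']
  linarith [mul_sub_le_of_mem_signSet (b := b) (K := K) hw (hd t ht)]

/-- Sliding-mode reaching inequality: if a.e. `σ'(t) = b·d(t) − K·w(t)` with
`w(t) ∈ sign(σ(t))`, `|d| ≤ K_d`, and `K > |b|·K_d`, then
`(1/2)·(d/dt)|σ(t)|² ≤ −(K − |b|·K_d)·|σ(t)|` a.e. on `t ≥ 0`. -/
theorem stmt0 (σ σ' d w : ℝ → ℝ) (b K K_d : ℝ)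
    (hb : b ≠ 0) (hKd : 0 ≤ K_d) (hK : K > |b| * K_d)
    (hd_meas : Measurable d) (hw_meas : Measurable w)
    (hd : ∀ t, 0 ≤ t → |d t| ≤ K_d)
    (hderiv : ∀ᵐ t : ℝ, 0 ≤ t → HasDerivAt σ (σ' t) t)
    (hsel : ∀ᵐ t : ℝ, 0 ≤ t → w t ∈ signSet (σ t) ∧ σ' t = b * d t - K * w t) :
    ∀ᵐ t : ℝ, 0 ≤ t → (1 / 2) * deriv (fun s => |σ s| ^ 2) t ≤ -(K - |b| * K_d) * |σ t| :=
  stmt0_general σ σ' d w b K K_d hd hderiv hsel
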